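/- Let c = (c_1,…,c_n) ∈ (0,∞)^n have geometric mean γ = (∏_{k=1}^n c_k)^{1/n} < 1. Then: (i) ν₊(c) and ν̄(c) are both odd (in particular positive); (ii) the equation P(z; c) = 1 has exactly one root in the closed right half-plane that is real, this root lies in the open interval (0, 1), and it is simple; (iii) there is a unique y > 0 such that |P(iy; c)| = 1. -/

import Mathlib

open Polynomial

noncomputable def Pc {n : ℕ} (c : Fin n → ℝ) : Polynomial ℂ :=
  ∏ k, (X + C (c k : ℂ))

noncomputable def nuPlus {n : ℕ} (c : Fin n → ℝ) : ℕ :=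
  Multiset.card ((Pc c - 1).roots.filter (fun z => 0 < z.re))

noncomputable def nuBar {n : ℕ} (c : Fin n → ℝ) : ℕ :=
  Multiset.card ((Pc c - 1).roots.filter (fun z => 0 ≤ z.re))

/-- strict monotonicity of products of positive increasing factors -/
private lemma aux_strictMonoOn {n : ℕ} (hn : 1 ≤ n) (d : Fin n → ℝ) (hd : ∀ k, 0 < d k) :
    StrictMonoOn (fun x : ℝ => ∏ k, (x + d k)) (Set.Ici 0) := by
  intro a ha b hb hab
  haveI : Nonempty (Fin n) := Fin.pos_iff_nonempty.mp (by omega)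
  have hne : (Finset.univ : Finset (Fin n)).Nonempty := Finset.univ_nonempty
  refine Finset.prod_lt_prod_of_nonempty (fun k _ => ?_) (fun k _ => ?_) hne
  · have := hd k; have : (0:ℝ) ≤ a := ha; linarith [hd k]
  · linarith

private lemma even_card_im_ne (t : Multiset ℂ)
    (h : ∀ z : ℂ, t.count ((starRingEnd ℂ) z) = t.count z) :
    Even (Multiset.card (t.filter (fun z => ¬ z.im = 0))) := by
  classical
  have hinj : Function.Injective (starRingEnd ℂ) := (starRingEnd ℂ).injective
  have key : (t.filter fun z => 0 < z.im).map (starRingEnd ℂ)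
      = t.filter fun z => z.im < 0 := by
    ext z
    rw [Multiset.count_filter]
    conv_lhs => rw [show z = (starRingEnd ℂ) ((starRingEnd ℂ) z) from (Complex.conj_conj z).symm]
    rw [Multiset.count_map_eq_count' _ _ hinj, Multiset.count_filter]
    by_cases h1 : z.im < 0
    · rw [if_pos (by simp only [Complex.conj_im]; linarith), if_pos h1, h]
    · rw [if_neg (by simp only [Complex.conj_im]; intro hh; exact h1 (by linarith)), if_neg h1]
  have hsplit : Multiset.card (t.filter fun z => 0 < z.im)
      + Multiset.card (t.filter fun z => z.im < 0)
      = Multiset.card (t.filter fun z => ¬ z.im = 0) := by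
    rw [← Multiset.card_add, Multiset.filter_add_filter]
    have h1 : Multiset.filter (fun a => 0 < a.im ∧ a.im < 0) t = 0 :=
      Multiset.filter_eq_nil.mpr (by rintro a _ ⟨u, v⟩; linarith)
    have h2 : Multiset.filter (fun a => 0 < a.im ∨ a.im < 0) t
        = Multiset.filter (fun z => ¬ z.im = 0) t := by
      apply Multiset.filter_congr
      intro z _
      constructor
      · rintro (u | u) <;> intro hz <;> rw [hz] at u <;> simp at u
      · intro hz
        rcases lt_or_gt_of_ne hz with u | u
        · exact Or.inr u
        · exact Or.inl u
    rw [h1, h2, Multiset.card_add, Multiset.card_zero, add_zero]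
  have hcardeq : Multiset.card (t.filter fun z => 0 < z.im)
      = Multiset.card (t.filter fun z => z.im < 0) := by
    rw [← key, Multiset.card_map]
  refine ⟨Multiset.card (t.filter fun z => 0 < z.im), ?_⟩
  omega

private lemma odd_card_filter (s : Multiset ℂ)
    (hconj : ∀ z : ℂ, s.count ((starRingEnd ℂ) z) = s.count z)
    (p : ℂ → Prop) [DecidablePred p] (hp : ∀ z : ℂ, p z ↔ p ((starRingEnd ℂ) z))
    (x : ℂ) (hfilter : s.filter (fun z => z.im = 0 ∧ p z) = {x}) :
    Odd (Multiset.card (s.filter p)) := by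
  classical
  have ht : ∀ z : ℂ, (s.filter p).count ((starRingEnd ℂ) z) = (s.filter p).count z := by
    intro z
    rw [Multiset.count_filter, Multiset.count_filter, hconj]
    by_cases h1 : p z
    · rw [if_pos ((hp z).mp h1), if_pos h1]
    · rw [if_neg (fun hh => h1 ((hp z).mpr hh)), if_neg h1]
  obtain ⟨m, hm⟩ := even_card_im_ne (s.filter p) ht
  have hpart : Multiset.card (s.filter p)
      = Multiset.card ((s.filter p).filter (fun z => z.im = 0))
        + Multiset.card ((s.filter p).filter (fun z => ¬ z.im = 0)) := by
    rw [← Multiset.card_add, Multiset.filter_add_not]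
  have h1 : (s.filter p).filter (fun z => z.im = 0) = {x} := by
    rw [Multiset.filter_filter]; exact hfilter
  refine ⟨m, ?_⟩
  rw [hpart, h1, hm]
  simp; omega

private lemma Pc_eval_ofReal {n : ℕ} (c : Fin n → ℝ) (x : ℝ) :
    (Pc c).eval (x : ℂ) = ((∏ k, (x + c k) : ℝ) : ℂ) := by
  simp [Pc, eval_prod]

/-- if `c ∈ (0,∞)ⁿ` has geometric mean `γ < 1`, then (i) `ν₊(c)`
and `ν̄(c)` are odd; (ii) `P(z; c) = 1` has exactly one real root in the closed
right half-plane, which lies in `(0,1)` and is simple; (iii) there is a unique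
`y > 0` with `|P(iy; c)| = 1`. -/
theorem stmt9 (n : ℕ) (hn : 1 ≤ n) (c : Fin n → ℝ) (hc : ∀ k, 0 < c k)
    (γ : ℝ) (hγ0 : 0 < γ) (hγ : γ < 1) (hg : ∏ k, c k = γ ^ n) :
    (Odd (nuPlus c) ∧ Odd (nuBar c)) ∧
    (∃ x : ℝ, 0 < x ∧ x < 1 ∧ (Pc c).eval (x : ℂ) = 1 ∧
      (Pc c - 1).rootMultiplicity (x : ℂ) = 1 ∧
      ∀ z : ℂ, (Pc c).eval z = 1 → 0 ≤ z.re → z.im = 0 → z = (x : ℂ)) ∧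
    (∃! y : ℝ, 0 < y ∧ ‖(Pc c).eval (y * Complex.I)‖ = 1) := by
  classical
  haveI : Nonempty (Fin n) := Fin.pos_iff_nonempty.mp (by omega)
  have hne : (Finset.univ : Finset (Fin n)).Nonempty := Finset.univ_nonempty
  set f : ℝ → ℝ := fun x => ∏ k, (x + c k) with hfdef
  have hmono : StrictMonoOn f (Set.Ici 0) := aux_strictMonoOn hn c hc
  have hcont : Continuous f := by
    apply continuous_finset_prod
    intro i _
    exact continuous_id.add continuous_const
  have hf0 : f 0 < 1 := by
    have : f 0 = γ ^ n := by simp [hfdef, hg]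
    rw [this]
    exact pow_lt_one₀ hγ0.le hγ (by omega)
  have hf1 : 1 < f 1 := by
    show (1:ℝ) < ∏ k, ((1:ℝ) + c k)
    have h := Finset.prod_lt_prod_of_nonempty (f := fun _ : Fin n => (1:ℝ))
      (g := fun k => 1 + c k) (fun k _ => one_pos) (fun k _ => by have := hc k; linarith) hne
    simpa using h
  -- existence of the real root x ∈ (0,1)
  obtain ⟨x, hx, hfx⟩ : ∃ x ∈ Set.Ioo (0:ℝ) 1, f x = 1 := by
    have := intermediate_value_Ioo (by norm_num : (0:ℝ) ≤ 1) hcont.continuousOn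
      (Set.mem_Ioo.mpr ⟨hf0, hf1⟩)
    obtain ⟨x, hx, hfx⟩ := this
    exact ⟨x, hx, hfx⟩
  have hx0 : 0 < x := hx.1
  have hx1 : x < 1 := hx.2
  -- Q and basic facts
  have hQdeg : (Pc c).natDegree = n := by
    rw [Pc, natDegree_prod]
    · simp
    · intro k _; exact X_add_C_ne_zero _
  have hQne : Pc c - 1 ≠ 0 := by
    intro h
    have h1 : Pc c = 1 := by rwa [sub_eq_zero] at h
    rw [h1] at hQdeg
    simp at hQdeg
    omega
  -- uniqueness of real roots in the closed right half-plane
  have huniq : ∀ z : ℂ, (Pc c).eval z = 1 → 0 ≤ z.re → z.im = 0 → z = (x : ℂ) := by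
    intro z h1 h2 h3
    have hz : z = (z.re : ℂ) := Complex.ext (by simp) (by simp [h3])
    rw [hz, Pc_eval_ofReal] at h1
    have hfz : f z.re = 1 := by exact_mod_cast h1
    have : z.re = x := hmono.injOn h2 (Set.mem_Ici.mpr hx0.le) (by rw [hfz, hfx])
    rw [hz, this]
  have hevalx : (Pc c).eval (x : ℂ) = 1 := by
    rw [Pc_eval_ofReal]
    exact_mod_cast congrArg (Complex.ofReal) hfx
  -- root multiplicity 1
  have hroot : (Pc c - 1).IsRoot (x : ℂ) := by
    simp [IsRoot, eval_sub, hevalx]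
  have hderiv_ne : ¬ (derivative (Pc c - 1)).IsRoot (x : ℂ) := by
    have hd : derivative (Pc c - 1) = ∑ k, ∏ j ∈ Finset.univ.erase k, (X + C (c j : ℂ)) := by
      rw [derivative_sub, derivative_one, sub_zero, Pc, Finset.prod_eq_multiset_prod,
        derivative_prod]
      simp only [derivative_X_add_C, mul_one]
      simp [Finset.sum_eq_multiset_sum, Finset.prod_eq_multiset_prod, Finset.erase_val]
    intro hcon
    rw [IsRoot, hd] at hcon
    have : ((∑ k, ∏ j ∈ Finset.univ.erase k, (x + c j) : ℝ) : ℂ) = 0 := by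
      rw [← hcon]
      simp [eval_finset_sum, eval_prod]
    have h0 : (∑ k, ∏ j ∈ Finset.univ.erase k, (x + c j) : ℝ) = 0 := by exact_mod_cast this
    have hpos : 0 < (∑ k, ∏ j ∈ Finset.univ.erase k, (x + c j) : ℝ) := by
      apply Finset.sum_pos _ hne
      intro k _
      apply Finset.prod_pos
      intro j _
      have := hc j; linarith
    linarith
  have hmult : (Pc c - 1).rootMultiplicity (x : ℂ) = 1 := by
    have h1 : 0 < (Pc c - 1).rootMultiplicity (x : ℂ) := (rootMultiplicity_pos hQne).mpr hroot
    have h2 : ¬ 1 < (Pc c - 1).rootMultiplicity (x : ℂ) := by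
      rw [one_lt_rootMultiplicity_iff_isRoot hQne]
      rintro ⟨-, h⟩
      exact hderiv_ne h
    omega
  -- conjugation symmetry of the roots
  set s : Multiset ℂ := (Pc c - 1).roots with hsdef
  have hQmap : (Pc c - 1).map (starRingEnd ℂ) = Pc c - 1 := by
    rw [Polynomial.map_sub, Polynomial.map_one, Pc, Polynomial.map_prod]
    congr 1
    apply Finset.prod_congr rfl
    intro k _
    rw [Polynomial.map_add, map_X, map_C, Complex.conj_ofReal]
  have hroots : s.map (starRingEnd ℂ) = s := by
    have h1 := Splits.roots_map
      (IsAlgClosed.splits (k := ℂ) (Pc c - 1)) (starRingEnd ℂ)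
    rw [hQmap] at h1
    exact h1.symm
  have hcount : ∀ z : ℂ, s.count ((starRingEnd ℂ) z) = s.count z := by
    intro z
    have := Multiset.count_map_eq_count' (starRingEnd ℂ) s (starRingEnd ℂ).injective z
    rwa [hroots] at this
  -- the real-root filters are singletons
  have hcount_s : ∀ z : ℂ, z.im = 0 → 0 ≤ z.re → s.count z = (if z = (x:ℂ) then 1 else 0) := by
    intro z him hre
    by_cases hzx : z = (x : ℂ)
    · rw [if_pos hzx, hzx, hsdef, count_roots, hmult]
    · rw [if_neg hzx, hsdef, count_roots]
      apply rootMultiplicity_eq_zero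
      intro hcon
      apply hzx
      apply huniq z _ hre him
      have : (Pc c - 1).eval z = 0 := hcon
      rw [eval_sub, eval_one, sub_eq_zero] at this
      exact this
  have hfilterBar : s.filter (fun z => z.im = 0 ∧ (0 ≤ z.re)) = {(x : ℂ)} := by
    ext z
    rw [Multiset.count_filter, Multiset.count_singleton]
    by_cases hz : z.im = 0 ∧ 0 ≤ z.re
    · rw [if_pos hz, hcount_s z hz.1 hz.2]
    · rw [if_neg hz, if_neg]
      intro h
      rw [h] at hz
      exact hz ⟨by simp, by simpa using hx0.le⟩
  have hfilterPlus : s.filter (fun z => z.im = 0 ∧ (0 < z.re)) = {(x : ℂ)} := by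
    ext z
    rw [Multiset.count_filter, Multiset.count_singleton]
    by_cases hz : z.im = 0 ∧ 0 < z.re
    · rw [if_pos hz, hcount_s z hz.1 hz.2.le]
    · rw [if_neg hz, if_neg]
      intro h
      rw [h] at hz
      exact hz ⟨by simp, by simpa using hx0⟩
  -- parity
  have hoddPlus : Odd (nuPlus c) := by
    unfold nuPlus
    exact odd_card_filter s hcount (fun z => 0 < z.re)
      (fun z => by simp [Complex.conj_re]) (x : ℂ) hfilterPlus
  have hoddBar : Odd (nuBar c) := by
    unfold nuBar
    exact odd_card_filter s hcount (fun z => 0 ≤ z.re)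
      (fun z => by simp [Complex.conj_re]) (x : ℂ) hfilterBar
  -- part (iii)
  set g : ℝ → ℝ := fun y => ∏ k, (y ^ 2 + (c k) ^ 2) with hgdef
  have hgmono : StrictMonoOn g (Set.Ici 0) := by
    intro a ha b hb hab
    refine Finset.prod_lt_prod_of_nonempty (fun k _ => ?_) (fun k _ => ?_) hne
    · have := hc k; positivity
    · have : a ^ 2 < b ^ 2 := by nlinarith [Set.mem_Ici.mp ha]
      linarith
  have hgcont : Continuous g := by
    apply continuous_finset_prod
    intro i _
    exact (continuous_pow 2).add continuous_const
  have hg0 : g 0 < 1 := by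
    have h1 : g 0 = (γ ^ n) ^ 2 := by
      simp only [hgdef]
      rw [← hg, ← Finset.prod_pow]
      simp
    rw [h1, ← pow_mul]
    exact pow_lt_one₀ hγ0.le hγ (by omega)
  have hg1 : 1 < g 1 := by
    show (1:ℝ) < ∏ k, ((1:ℝ) ^ 2 + (c k) ^ 2)
    have h := Finset.prod_lt_prod_of_nonempty (f := fun _ : Fin n => (1:ℝ))
      (g := fun k => 1 ^ 2 + (c k) ^ 2) (fun k _ => one_pos)
      (fun k _ => by have := hc k; nlinarith) hne
    simpa using h
  obtain ⟨y₀, hy₀, hgy₀⟩ : ∃ y ∈ Set.Ioo (0:ℝ) 1, g y = 1 := by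
    have := intermediate_value_Ioo (by norm_num : (0:ℝ) ≤ 1) hgcont.continuousOn
      (Set.mem_Ioo.mpr ⟨hg0, hg1⟩)
    obtain ⟨y, hy, hgy⟩ := this
    exact ⟨y, hy, hgy⟩
  have habs_sq : ∀ y : ℝ, (‖(Pc c).eval ((y : ℂ) * Complex.I)‖) ^ 2 = g y := by
    intro y
    rw [Complex.sq_norm, Pc, eval_prod]
    rw [map_prod Complex.normSq]
    apply Finset.prod_congr rfl
    intro k _
    simp [Complex.normSq_apply, Complex.add_re, Complex.add_im, Complex.mul_re,
      Complex.mul_im]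
    ring
  have habs_iff : ∀ y : ℝ, ‖(Pc c).eval ((y : ℂ) * Complex.I)‖ = 1 ↔ g y = 1 := by
    intro y
    constructor
    · intro h
      rw [← habs_sq y, h]; norm_num
    · intro h
      have h2 := habs_sq y
      rw [h] at h2
      have h3 := norm_nonneg ((Pc c).eval ((y : ℂ) * Complex.I))
      nlinarith
  refine ⟨⟨hoddPlus, hoddBar⟩, ⟨x, hx0, hx1, hevalx, hmult, huniq⟩, ⟨y₀, ⟨hy₀.1, ?_⟩, ?_⟩⟩
  · exact (habs_iff y₀).mpr hgy₀
  · rintro y ⟨hy, habs⟩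
    have h1 : g y = 1 := (habs_iff y).mp habs
    exact hgmono.injOn hy.le (Set.mem_Ici.mpr hy₀.1.le) (by rw [h1, hgy₀])
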